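/- arXiv:2506.04531 — 2 statements merged into one kernel-verified Lean document; each statement's English description precedes it below -/
import Mathlib

section
/- Let E be a real inner product space and F : E → ℝ a differentiable function whose gradient ∇F is L-Lipschitz for some L > 0, and suppose F is bounded below: F(x) ≥ F_* for all x ∈ E. Fix β ∈ (0,1) and set γ = 1 + β²/(1−β). Let Θ, g, m : ℕ → E and η : ℕ → ℝ satisfy m_0 = 0, m_{t+1} = β·m_t + g_t, Θ_{t+1} = Θ_t − η_t·((1−β)·g_t + β·m_{t+1}), with 0 < η_m ≤ η_t ≤ η_0 ≤ (γ−β²)/(6Lγ²) for all t. Suppose there is B ≥ 0 such that for all t, ‖g_t − ∇F(Θ_t)‖² ≤ B and ‖m_t − g_t/(1−β)‖² ≤ B. Then for every T ≥ 1: min over 0 ≤ t < T of ‖∇F(Θ_t)‖² ≤ 4(F(Θ_0) − F_*)/(η_m·(γ−β²)·T) + (2η_0·(γ+β²) + 6L·η_0²·(γ²+β⁴))·B/(η_m·(γ−β²)). -/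
open Finset

/-!
The server's update direction splits as
`(1 - β) g_t + β m_{t+1} = γ ∇F(Θ_t) + γ (g_t - ∇F(Θ_t)) + β² (m_t - g_t / (1 - β))`,
a perturbation of `γ ∇F(Θ_t)` by two errors of squared norm at most `B`. The quadratic upper
bound for an `L`-smooth `F`, with Young's inequality on the cross terms, shows that each step
lowers `F` by at least `η_m (γ - β²) / 4 ‖∇F(Θ_t)‖²` up to an error `O(η_0 + L η_0²) B`.
Telescoping over `T` steps against `F ≥ F_*` bounds the average, hence the minimum, of
`‖∇F(Θ_t)‖²`.
-/

theorem neg_add_sq_div_two_le_real_inner {E : Type*} [NormedAddCommGroup E]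
    [InnerProductSpace ℝ E] (x y : E) : -((‖x‖ ^ 2 + ‖y‖ ^ 2) / 2) ≤ inner ℝ x y := by
  linarith [norm_add_sq_real x y, sq_nonneg ‖x + y‖]

theorem norm_add₃_sq_le {E : Type*} [SeminormedAddCommGroup E] (x y z : E) :
    ‖x + y + z‖ ^ 2 ≤ 3 * (‖x‖ ^ 2 + ‖y‖ ^ 2 + ‖z‖ ^ 2) := by
  have := pow_le_pow_left₀ (norm_nonneg _) (norm_add₃_le (a := x) (b := y) (c := z)) 2
  nlinarith [sq_nonneg (‖x‖ - ‖y‖), sq_nonneg (‖y‖ - ‖z‖), sq_nonneg (‖x‖ - ‖z‖)]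

theorem momentum_direction_eq {E : Type*} [AddCommGroup E] [Module ℝ E] {β γ : ℝ}
    (hγ : γ = 1 + β ^ 2 / (1 - β)) (G g m : E) :
    (1 - β) • g + β • (β • m + g) = γ • G + γ • (g - G) + β ^ 2 • (m - (1 - β)⁻¹ • g) := by
  subst hγ
  module

section SmoothFunction

variable {E : Type*} [NormedAddCommGroup E] [InnerProductSpace ℝ E] [CompleteSpace E]
  {F : E → ℝ} {L : ℝ}

theorem le_add_inner_gradient_add_sq_of_lipschitz_gradient (hF : Differentiable ℝ F)
    (hLip : ∀ x y : E, ‖gradient F x - gradient F y‖ ≤ L * ‖x - y‖) (x y : E) :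
    F y ≤ F x + inner ℝ (gradient F x) (y - x) + L / 2 * ‖y - x‖ ^ 2 := by
  set d := y - x
  let φ : ℝ → ℝ := fun t => F (x + t • d) - t * inner ℝ (gradient F x) d - L / 2 * t ^ 2 * ‖d‖ ^ 2
  have hφ : ∀ t, HasDerivAt φ
      (inner ℝ (gradient F (x + t • d)) d - inner ℝ (gradient F x) d - L * t * ‖d‖ ^ 2) t := by
    intro t
    have hline : HasDerivAt (fun s : ℝ => x + s • d) d t := by
      simpa using ((hasDerivAt_id t).smul_const d).const_add x
    have hFline := (hF (x + t • d)).hasGradientAt.hasFDerivAt.comp_hasDerivAt t hline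
    simp only [InnerProductSpace.toDual_apply_apply] at hFline
    have h := (hFline.sub ((hasDerivAt_id t).mul_const (inner ℝ (gradient F x) d))).sub
      (((hasDerivAt_pow 2 t).const_mul (L / 2)).mul_const (‖d‖ ^ 2))
    exact h.congr_deriv (by push_cast; ring)
  have hanti : AntitoneOn φ (Set.Ici 0) := by
    refine antitoneOn_of_hasDerivWithinAt_nonpos (convex_Ici 0)
      (fun t _ => (hφ t).continuousAt.continuousWithinAt) (fun t _ => (hφ t).hasDerivWithinAt) ?_
    intro t ht
    rw [interior_Ici, Set.mem_Ioi] at ht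
    have hcs := real_inner_le_norm (gradient F (x + t • d) - gradient F x) d
    have hlip := hLip (x + t • d) x
    rw [add_sub_cancel_left, norm_smul, Real.norm_eq_abs, abs_of_pos ht] at hlip
    rw [inner_sub_left] at hcs
    nlinarith [mul_le_mul_of_nonneg_right hlip (norm_nonneg d)]
  have h01 := hanti Set.self_mem_Ici (Set.mem_Ici.mpr zero_le_one) zero_le_one
  simp only [φ, d, zero_smul, one_smul, add_zero, add_sub_cancel, zero_mul, one_mul, sub_zero,
    one_pow, mul_one, ne_eq, OfNat.ofNat_ne_zero, not_false_eq_true, zero_pow, mul_zero] at h01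
  linarith

theorem descent_of_perturbed_gradient_step (hL : 0 ≤ L) (hF : Differentiable ℝ F)
    (hLip : ∀ x y : E, ‖gradient F x - gradient F y‖ ≤ L * ‖x - y‖)
    {a b η B : ℝ} (hb : 0 ≤ b) (hη : 0 ≤ η) (hηL : 6 * L * a ^ 2 * η ≤ a - b)
    {x δ e : E} (hδ : ‖δ‖ ^ 2 ≤ B) (he : ‖e‖ ^ 2 ≤ B) :
    F (x - η • (a • gradient F x + a • δ + b • e)) + η * (a - b) / 4 * ‖gradient F x‖ ^ 2
      ≤ F x + (η * (a + b) / 2 + 3 / 2 * L * η ^ 2 * (a ^ 2 + b ^ 2)) * B := by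
  set G := gradient F x
  set v := a • G + a • δ + b • e
  have ha : 0 ≤ a := by nlinarith [sq_nonneg a, mul_nonneg (mul_nonneg hL (sq_nonneg a)) hη]
  have hquad := le_add_inner_gradient_add_sq_of_lipschitz_gradient hF hLip x (x - η • v)
  rw [sub_sub_cancel_left, inner_neg_right, real_inner_smul_right, norm_neg, norm_smul,
    Real.norm_eq_abs, mul_pow, sq_abs] at hquad
  have hinner : (a - b) / 2 * ‖G‖ ^ 2 - a / 2 * ‖δ‖ ^ 2 - b / 2 * ‖e‖ ^ 2 ≤ inner ℝ G v := by
    have hGδ := neg_add_sq_div_two_le_real_inner G δ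
    have hGe := neg_add_sq_div_two_le_real_inner G e
    simp only [v, inner_add_right, real_inner_smul_right, real_inner_self_eq_norm_sq]
    nlinarith [mul_le_mul_of_nonneg_left hGδ ha, mul_le_mul_of_nonneg_left hGe hb]
  have hnorm : ‖v‖ ^ 2 ≤ 3 * (a ^ 2 * ‖G‖ ^ 2 + a ^ 2 * ‖δ‖ ^ 2 + b ^ 2 * ‖e‖ ^ 2) := by
    simpa only [norm_smul, Real.norm_eq_abs, mul_pow, sq_abs] using
      norm_add₃_sq_le (a • G) (a • δ) (b • e)
  have hB : 0 ≤ B := (sq_nonneg _).trans hδ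
  -- `6 L a² η ≤ a - b` lets the `‖∇F x‖²` part of the quadratic term eat at most half of the
  -- first-order decrease `η (a - b) / 2 ‖∇F x‖²`.
  nlinarith [mul_le_mul_of_nonneg_left hinner hη,
    mul_le_mul_of_nonneg_left hnorm (by positivity : 0 ≤ L / 2 * η ^ 2),
    mul_le_mul_of_nonneg_right hηL (by positivity : 0 ≤ η * ‖G‖ ^ 2),
    mul_le_mul_of_nonneg_left hδ (by positivity : 0 ≤ η * a),
    mul_le_mul_of_nonneg_left he (by positivity : 0 ≤ η * b),
    mul_le_mul_of_nonneg_left hδ (by positivity : 0 ≤ L * η ^ 2 * a ^ 2),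
    mul_le_mul_of_nonneg_left he (by positivity : 0 ≤ L * η ^ 2 * b ^ 2)]

end SmoothFunction

theorem pos_and_mul_le_of_le_div {c d η : ℝ} (hd : 0 ≤ d) (hη : 0 < η) (h : η ≤ c / d) :
    0 < c ∧ d * η ≤ c := by
  obtain ⟨hc, hd⟩ | ⟨-, hd'⟩ := div_pos_iff.mp (hη.trans_le h)
  · exact ⟨hc, by rwa [mul_comm, ← le_div_iff₀ hd]⟩
  · exact absurd hd' hd.not_gt

theorem inf'_range_le_of_descent {u a : ℕ → ℝ} {c K u₀ : ℝ} (hc : 0 < c)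
    (hstep : ∀ t, u (t + 1) + c * a t ≤ u t + K) (hlow : ∀ t, u₀ ≤ u t)
    {T : ℕ} (hT : (range T).Nonempty) :
    (range T).inf' hT a ≤ (u 0 - u₀) / (c * T) + K / c := by
  have hTpos : (0 : ℝ) < T := by exact_mod_cast nonempty_range_iff.mp hT |> Nat.pos_of_ne_zero
  have hsum : c * ∑ t ∈ range T, a t ≤ u 0 - u T + T * K := by
    calc c * ∑ t ∈ range T, a t ≤ ∑ t ∈ range T, (u t - u (t + 1) + K) := by
          rw [mul_sum]; exact sum_le_sum fun t _ => by linarith [hstep t]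
      _ = u 0 - u T + T * K := by
          rw [sum_add_distrib, sum_range_sub', sum_const, card_range, nsmul_eq_mul]
  have hmin : T * (range T).inf' hT a ≤ ∑ t ∈ range T, a t := by
    simpa [nsmul_eq_mul] using card_nsmul_le_sum (range T) a _ fun t ht => inf'_le a ht
  rw [div_add_div _ _ (by positivity) hc.ne', le_div_iff₀ (by positivity)]
  nlinarith [hlow T, mul_le_mul_of_nonneg_left hmin hc.le]

/-- Convergence of the HALoS global-server momentum recursion (Theorem 1, descent form). -/
theorem halos_convergence
    {E : Type*} [NormedAddCommGroup E] [InnerProductSpace ℝ E] [CompleteSpace E]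
    (F : E → ℝ) (L : ℝ) (hL : 0 < L)
    (hF : Differentiable ℝ F)
    (hLip : ∀ x y : E, ‖gradient F x - gradient F y‖ ≤ L * ‖x - y‖)
    (Fstar : ℝ) (hbdd : ∀ x : E, F x ≥ Fstar)
    (β : ℝ)
    (γ : ℝ) (hγ : γ = 1 + β ^ 2 / (1 - β))
    (Θ g m : ℕ → E) (η : ℕ → ℝ) (ηm η0 : ℝ)
    (hmrec : ∀ t : ℕ, m (t + 1) = β • m t + g t)
    (hΘrec : ∀ t : ℕ, Θ (t + 1) = Θ t - η t • ((1 - β) • g t + β • m (t + 1)))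
    (hηm : 0 < ηm)
    (hηlb : ∀ t : ℕ, ηm ≤ η t) (hηub : ∀ t : ℕ, η t ≤ η0)
    (hη0 : η0 ≤ (γ - β ^ 2) / (6 * L * γ ^ 2))
    (B : ℝ)
    (hg : ∀ t : ℕ, ‖g t - gradient F (Θ t)‖ ^ 2 ≤ B)
    (hmom : ∀ t : ℕ, ‖m t - (1 - β)⁻¹ • g t‖ ^ 2 ≤ B) :
    ∀ T : ℕ, ∀ _hT : 1 ≤ T,
      (Finset.range T).inf' (Finset.nonempty_range_iff.mpr (by omega))
          (fun t => ‖gradient F (Θ t)‖ ^ 2)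
        ≤ 4 * (F (Θ 0) - Fstar) / (ηm * (γ - β ^ 2) * T)
          + (2 * η0 * (γ + β ^ 2) + 6 * L * η0 ^ 2 * (γ ^ 2 + β ^ 4)) * B
            / (ηm * (γ - β ^ 2)) := by
  intro T hT
  obtain ⟨hgap, hη0L⟩ :=
    pos_and_mul_le_of_le_div (by positivity) (hηm.trans_le ((hηlb 0).trans (hηub 0))) hη0
  have hγβ : 0 ≤ γ + β ^ 2 := by linarith [sq_nonneg β]
  have hB : 0 ≤ B := (sq_nonneg _).trans (hg 0)
  have hstep : ∀ t, F (Θ (t + 1)) + ηm * (γ - β ^ 2) / 4 * ‖gradient F (Θ t)‖ ^ 2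
      ≤ F (Θ t) + (η0 * (γ + β ^ 2) / 2 + 3 / 2 * L * η0 ^ 2 * (γ ^ 2 + (β ^ 2) ^ 2)) * B := by
    intro t
    have hηt : 0 ≤ η t := hηm.le.trans (hηlb t)
    have hdesc := descent_of_perturbed_gradient_step (a := γ) (x := Θ t) hL.le hF hLip
      (sq_nonneg β) hηt (hη0L.trans' (by gcongr; exact hηub t)) (hg t) (hmom t)
    rw [← momentum_direction_eq hγ, ← hmrec, ← hΘrec] at hdesc
    calc _ ≤ F (Θ (t + 1)) + η t * (γ - β ^ 2) / 4 * ‖gradient F (Θ t)‖ ^ 2 := by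
          gcongr; exact hηlb t
      _ ≤ _ := hdesc
      _ ≤ _ := by gcongr <;> exact hηub t
  calc _ ≤ _ := inf'_range_le_of_descent (u := fun t => F (Θ t)) (by positivity) hstep
        (fun t => hbdd (Θ t)) _
    _ = _ := by field_simp; ring
end

section
/- Let E be a real inner product space, β ∈ [0,1), and g : ℕ → E. Define m_t = Σ_{i=0}^{t−1} β^i·g_{t−1−i}. Suppose there are c, G' ≥ 0 with ‖g_i − g_j‖ ≤ c for all i, j and ‖g_t‖ ≤ G' for all t. Then for every t, ‖m_t − g_t/(1−β)‖ ≤ (c·(1−β^t) + G'·β^t)/(1−β), and in particular ‖m_t − g_t/(1−β)‖² ≤ ((c + G')/(1−β))². -/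
open Finset

/-!
Since `∑_{i<t} β^i = (1 - β^t)/(1 - β)`, the deviation `m_t - g_t/(1-β)` splits as
`∑_{i<t} β^i (g_{t-1-i} - g_t) - β^t/(1-β) · g_t`: each difference costs at most `c`,
and the geometric tail that the finite buffer has not yet accumulated costs at most `G' β^t/(1-β)`.
-/

section GeometricWeights

variable {E : Type*} [NormedAddCommGroup E] [NormedSpace ℝ E]

theorem geom_sum_eq_one_sub_pow_div {β : ℝ} (hβ : β ≠ 1) (t : ℕ) :
    ∑ i ∈ range t, β ^ i = (1 - β ^ t) / (1 - β) := by
  rw [eq_div_iff (sub_ne_zero.2 hβ.symm), geom_sum_mul_neg]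

theorem geom_sum_smul_sub_inv_smul {β : ℝ} (hβ : β ≠ 1) (f : ℕ → E) (y : E) (t : ℕ) :
    ∑ i ∈ range t, β ^ i • f i - (1 - β)⁻¹ • y =
      ∑ i ∈ range t, β ^ i • (f i - y) - (β ^ t / (1 - β)) • y := by
  have hinv : (1 - β)⁻¹ = ∑ i ∈ range t, β ^ i + β ^ t / (1 - β) := by
    rw [geom_sum_eq_one_sub_pow_div hβ, ← add_div, sub_add_cancel, one_div]
  simp only [smul_sub, sum_sub_distrib, ← sum_smul, hinv, add_smul]
  abel

theorem norm_geom_sum_smul_le {β : ℝ} (hβ0 : 0 ≤ β) (hβ1 : β < 1) {v : ℕ → E} {c : ℝ}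
    {t : ℕ} (hv : ∀ i < t, ‖v i‖ ≤ c) :
    ‖∑ i ∈ range t, β ^ i • v i‖ ≤ c * (1 - β ^ t) / (1 - β) := by
  calc ‖∑ i ∈ range t, β ^ i • v i‖
      ≤ ∑ i ∈ range t, β ^ i * c := norm_sum_le_of_le _ fun i hi => by
        rw [norm_smul, Real.norm_of_nonneg (pow_nonneg hβ0 i)]
        exact mul_le_mul_of_nonneg_left (hv i (mem_range.1 hi)) (pow_nonneg hβ0 i)
    _ = c * (1 - β ^ t) / (1 - β) := by
        rw [← sum_mul, geom_sum_eq_one_sub_pow_div hβ1.ne, mul_comm, mul_div_assoc]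

theorem norm_geom_sum_smul_sub_inv_smul_le {β : ℝ} (hβ0 : 0 ≤ β) (hβ1 : β < 1)
    {f : ℕ → E} {y : E} {c G : ℝ} {t : ℕ} (hf : ∀ i < t, ‖f i - y‖ ≤ c) (hy : ‖y‖ ≤ G) :
    ‖∑ i ∈ range t, β ^ i • f i - (1 - β)⁻¹ • y‖ ≤ (c * (1 - β ^ t) + G * β ^ t) / (1 - β) := by
  have hβt : 0 ≤ β ^ t / (1 - β) := div_nonneg (pow_nonneg hβ0 t) (sub_nonneg.2 hβ1.le)
  rw [geom_sum_smul_sub_inv_smul hβ1.ne]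
  calc _ ≤ ‖∑ i ∈ range t, β ^ i • (f i - y)‖ + ‖(β ^ t / (1 - β)) • y‖ := norm_sub_le _ _
    _ ≤ c * (1 - β ^ t) / (1 - β) + β ^ t / (1 - β) * G := by
        rw [norm_smul, Real.norm_of_nonneg hβt]
        gcongr
        exact norm_geom_sum_smul_le hβ0 hβ1 hf
    _ = (c * (1 - β ^ t) + G * β ^ t) / (1 - β) := by ring

end GeometricWeights

theorem global_momentum_deviation_general
    {E : Type*} [NormedAddCommGroup E] [InnerProductSpace ℝ E]
    (β : ℝ) (hβ0 : 0 ≤ β) (hβ1 : β < 1)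
    (g : ℕ → E) (c G' : ℝ)
    (hdiff : ∀ i j : ℕ, ‖g i - g j‖ ≤ c) (hbdd : ∀ t : ℕ, ‖g t‖ ≤ G')
    (m : ℕ → E) (hm : ∀ t : ℕ, m t = ∑ i ∈ Finset.range t, β ^ i • g (t - 1 - i)) :
    ∀ t : ℕ,
      ‖m t - (1 - β)⁻¹ • g t‖ ≤ (c * (1 - β ^ t) + G' * β ^ t) / (1 - β) ∧
        ‖m t - (1 - β)⁻¹ • g t‖ ^ 2 ≤ ((c + G') / (1 - β)) ^ 2 := by
  intro t
  have hbound : ‖m t - (1 - β)⁻¹ • g t‖ ≤ (c * (1 - β ^ t) + G' * β ^ t) / (1 - β) :=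
    hm t ▸ norm_geom_sum_smul_sub_inv_smul_le hβ0 hβ1 (fun i _ => hdiff _ _) (hbdd t)
  have hc : 0 ≤ c := (norm_nonneg _).trans (hdiff 0 0)
  have hG' : 0 ≤ G' := (norm_nonneg _).trans (hbdd 0)
  have hβt0 : 0 ≤ β ^ t := pow_nonneg hβ0 t
  have hβt1 : β ^ t ≤ 1 := pow_le_one₀ hβ0 hβ1.le
  have hweaken : c * (1 - β ^ t) + G' * β ^ t ≤ c + G' := by nlinarith
  refine ⟨hbound, pow_le_pow_left₀ (norm_nonneg _) (hbound.trans ?_) 2⟩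
  exact div_le_div_of_nonneg_right hweaken (sub_nonneg.2 hβ1.le)

/-- The global momentum buffer `m_t = ∑_{i<t} β^i g_{t-1-i}` stays close to
`g_t / (1 - β)` when consecutive gradients are close and bounded. -/
theorem global_momentum_deviation
    {E : Type*} [NormedAddCommGroup E] [InnerProductSpace ℝ E]
    (β : ℝ) (hβ0 : 0 ≤ β) (hβ1 : β < 1)
    (g : ℕ → E) (c G' : ℝ) (hc : 0 ≤ c) (hG' : 0 ≤ G')
    (hdiff : ∀ i j : ℕ, ‖g i - g j‖ ≤ c) (hbdd : ∀ t : ℕ, ‖g t‖ ≤ G')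
    (m : ℕ → E) (hm : ∀ t : ℕ, m t = ∑ i ∈ Finset.range t, β ^ i • g (t - 1 - i)) :
    ∀ t : ℕ,
      ‖m t - (1 - β)⁻¹ • g t‖ ≤ (c * (1 - β ^ t) + G' * β ^ t) / (1 - β) ∧
        ‖m t - (1 - β)⁻¹ • g t‖ ^ 2 ≤ ((c + G') / (1 - β)) ^ 2 :=
  global_momentum_deviation_general β hβ0 hβ1 g c G' hdiff hbdd m hm
end
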